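/- Let X and Z be independent random variables, each exponentially distributed with rate 1, and let a > 0, b > 0, t ≥ 1 be real numbers. Then the probability that (1 + a·X)/(1 + b·Z) ≥ t equals exp(−(t − 1)/a) · (1 + (t/a)·b)^{−1}. -/

import Mathlib

/-!
Conditioning on `Z = z ≥ 0`, the event is `X ≥ (t (1 + b z) - 1) / a`, a threshold that is
nonnegative because `t ≥ 1`, so its conditional probability is
`exp (-(t - 1) / a) · exp (-(t b / a) z)`. Averaging over `Z` leaves the Laplace transform `𝔼 [exp (-s Z)] = 1 / (1 + s)` at `s = t b / a`.
-/

open MeasureTheory ProbabilityTheory Real Set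

namespace ProbabilityTheory

lemma ae_nonneg_expMeasure (r : ℝ) : ∀ᵐ z ∂expMeasure r, 0 ≤ z := by
  rw [ae_iff]
  simp only [not_le]
  exact (withDensity_apply _ (measurableSet_Iio (a := 0))).trans
    (lintegral_exponentialPDF_of_nonpos le_rfl)

lemma expMeasure_Ici {r c : ℝ} (hr : 0 < r) (hc : 0 ≤ c) :
    expMeasure r (Ici c) = ENNReal.ofReal (exp (-(r * c))) := by
  have := isProbabilityMeasure_expMeasure hr
  have hc_atom : expMeasure r {c} = 0 :=
    withDensity_absolutelyContinuous volume _ (Real.volume_singleton)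
  have hexp_le : exp (-(r * c)) ≤ 1 := exp_le_one_iff.2 (by nlinarith)
  rw [← measure_congr (Ioi_ae_eq_Ici' hc_atom), ← compl_Iic,
    prob_compl_eq_one_sub measurableSet_Iic, ← ofReal_cdf, cdf_expMeasure_eq hr, if_pos hc,
    ← ENNReal.ofReal_one, ← ENNReal.ofReal_sub _ (sub_nonneg.2 hexp_le), sub_sub_cancel]

lemma exponentialPDF_mul_exp_neg_mul {r s : ℝ} (hr : 0 < r) (hs : 0 ≤ s) (z : ℝ) :
    exponentialPDF r z * ENNReal.ofReal (exp (-(s * z)))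
      = ENNReal.ofReal (r / (r + s)) * exponentialPDF (r + s) z := by
  rcases lt_or_ge z 0 with hz | hz
  · simp only [exponentialPDF_of_neg hz, zero_mul, mul_zero]
  · rw [exponentialPDF_of_nonneg hz, exponentialPDF_of_nonneg hz,
      ← ENNReal.ofReal_mul (by positivity), ← ENNReal.ofReal_mul (by positivity)]
    congr 1
    have hrs : r + s ≠ 0 := by positivity
    rw [mul_assoc, ← exp_add, ← mul_assoc, div_mul_cancel₀ _ hrs]
    ring_nf

lemma lintegral_exp_neg_mul_expMeasure {r s : ℝ} (hr : 0 < r) (hs : 0 ≤ s) :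
    ∫⁻ z, ENNReal.ofReal (exp (-(s * z))) ∂expMeasure r = ENNReal.ofReal (r / (r + s)) := by
  change ∫⁻ z, _ ∂volume.withDensity (exponentialPDF r) = _
  have hpdf (q : ℝ) : Measurable (exponentialPDF q) :=
    (measurable_exponentialPDFReal q).ennreal_ofReal
  rw [lintegral_withDensity_eq_lintegral_mul _ (hpdf r) (by fun_prop)]
  simp only [Pi.mul_apply]
  rw [lintegral_congr (exponentialPDF_mul_exp_neg_mul hr hs),
    lintegral_const_mul _ (hpdf _),
    lintegral_exponentialPDF_eq_one (by positivity), mul_one]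

end ProbabilityTheory

lemma setOf_div_ge_eq_Ici {a d t : ℝ} (ha : 0 < a) (hd : 0 < d) :
    {x : ℝ | (1 + a * x) / d ≥ t} = Ici ((t * d - 1) / a) := by
  ext x
  simp only [mem_ofPred_eq, mem_Ici, ge_iff_le, le_div_iff₀ hd, div_le_iff₀ ha]
  constructor <;> intro h <;> linarith

/-- `X` and `Z` are the two coordinates under the product of two unit-rate exponential measures. -/
theorem ccdf_snr_ratio (a b t : ℝ) (ha : 0 < a) (hb : 0 < b) (ht : 1 ≤ t) :
    ((expMeasure 1).prod (expMeasure 1))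
      {p : ℝ × ℝ | (1 + a * p.1) / (1 + b * p.2) ≥ t}
      = ENNReal.ofReal (Real.exp (-(t - 1) / a) * (1 + (t / a) * b)⁻¹) := by
  have := isProbabilityMeasure_expMeasure one_pos
  have hS : MeasurableSet {p : ℝ × ℝ | (1 + a * p.1) / (1 + b * p.2) ≥ t} :=
    measurableSet_le measurable_const (by fun_prop)
  have hsection : ∀ᵐ z ∂expMeasure 1,
      expMeasure 1 ((fun x ↦ (x, z)) ⁻¹' {p : ℝ × ℝ | (1 + a * p.1) / (1 + b * p.2) ≥ t})
        = ENNReal.ofReal (exp (-(t - 1) / a)) * ENNReal.ofReal (exp (-(t * b / a * z))) := by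
    filter_upwards [ae_nonneg_expMeasure 1] with z hz
    have hd : 0 < 1 + b * z := by positivity
    have hthreshold : 0 ≤ (t * (1 + b * z) - 1) / a := div_nonneg (by nlinarith) ha.le
    rw [preimage_ofPred_eq, setOf_div_ge_eq_Ici ha hd, expMeasure_Ici one_pos hthreshold,
      ← ENNReal.ofReal_mul (exp_pos _).le, ← exp_add]
    congr 2
    field_simp
    ring
  rw [Measure.prod_apply_symm hS, lintegral_congr_ae hsection, lintegral_const_mul _ (by fun_prop),
    lintegral_exp_neg_mul_expMeasure one_pos (by positivity), ← ENNReal.ofReal_mul (exp_pos _).le]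
  congr 2
  field_simp
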